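/- Let n > 0 and 0 < T ≤ n be reals, and let y, z : ℝ → ℝ be differentiable on [0,T) with y(0) = n, z(0) = 0, and for all t ∈ [0,T): y(t) + z(t) > 0, y′(t) = −y(t)/(y(t)+z(t)) − 1, and z′(t) = 2y(t)/(y(t)+z(t)). For t ∈ [0,T) set X(t) = z(t)/(2(n−t)). Then for all t ∈ [0,T): (1/2)·ln(X(t)² + 1) + arctan X(t) = ln( n/(n−t) ). -/

import Mathlib

lemma const_on_Ico (T : ℝ) (f : ℝ → ℝ)
    (hf : ∀ x ∈ Set.Ico (0:ℝ) T, HasDerivWithinAt f 0 (Set.Ico 0 T) x) :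
    ∀ t ∈ Set.Ico (0:ℝ) T, f t = f 0 := by
  intro t ht
  apply constant_of_has_deriv_right_zero (f := f) (a := 0) (b := t)
  · intro x hx
    exact ((hf x ⟨hx.1, lt_of_le_of_lt hx.2 ht.2⟩).continuousWithinAt).mono
      (fun u hu => ⟨hu.1, lt_of_le_of_lt hu.2 ht.2⟩)
  · intro x hx
    refine (hf x ⟨hx.1, lt_of_lt_of_le hx.2 (le_of_lt ht.2)⟩).mono_of_mem_nhdsWithin ?_
    have h1 : Set.Iio T ∈ nhdsWithin x (Set.Ici x) :=
      mem_nhdsWithin_of_mem_nhds (Iio_mem_nhds (lt_of_lt_of_le hx.2 (le_of_lt ht.2)))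
    filter_upwards [h1, self_mem_nhdsWithin] with u hu1 hu2
    exact ⟨le_trans hx.1 hu2, hu1⟩
  · exact ⟨ht.1, le_refl t⟩

theorem implicit_solution (n T : ℝ) (hn : 0 < n) (hT : 0 < T) (hTn : T ≤ n)
    (y z : ℝ → ℝ) (hy0 : y 0 = n) (hz0 : z 0 = 0)
    (hpos : ∀ t ∈ Set.Ico (0 : ℝ) T, 0 < y t + z t)
    (hy' : ∀ t ∈ Set.Ico (0 : ℝ) T,
      HasDerivWithinAt y (-(y t) / (y t + z t) - 1) (Set.Ico 0 T) t)
    (hz' : ∀ t ∈ Set.Ico (0 : ℝ) T,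
      HasDerivWithinAt z (2 * y t / (y t + z t)) (Set.Ico 0 T) t) :
    ∀ t ∈ Set.Ico (0 : ℝ) T,
      (1 / 2) * Real.log ((z t / (2 * (n - t))) ^ 2 + 1) +
          Real.arctan (z t / (2 * (n - t))) =
        Real.log (n / (n - t)) := by
  set s := Set.Ico (0:ℝ) T with hs
  -- Step 1: the invariant y + z/2 + t = n
  have hw : ∀ t ∈ s, y t + z t / 2 + t = n := by
    have h := const_on_Ico T (fun u => y u + z u / 2 + u) ?_
    · intro t ht
      have := h t ht
      simp only [hy0, hz0] at this
      linarith [this]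
    · intro x hx
      have hd := ((hy' x hx).add ((hz' x hx).div_const 2)).add (hasDerivWithinAt_id x s)
      refine hd.congr_deriv ?_
      ring
  -- Step 2: derivative of the implicit expression is zero
  set G : ℝ → ℝ := fun u => (1/2) * Real.log ((z u / (2*(n-u)))^2 + 1) +
      Real.arctan (z u / (2*(n-u))) + Real.log (n - u) with hGdef
  have hG : ∀ t ∈ s, G t = G 0 := by
    apply const_on_Ico
    intro t ht
    have hc : 0 < n - t := by
      have := ht.2; simp only [hs, Set.mem_Ico] at ht; linarith [ht.2]
    have hyz : 0 < y t + z t := hpos t ht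
    have hyt : y t = n - t - z t / 2 := by have := hw t ht; linarith
    have hg : HasDerivWithinAt (fun u => 2*(n-u)) (2*(0-1)) s t :=
      ((hasDerivWithinAt_const t s n).sub (hasDerivWithinAt_id t s)).const_mul 2
    have hXd : HasDerivWithinAt (fun u => z u / (2*(n-u)))
        ((2 * y t / (y t + z t) * (2*(n-t)) - z t * (2*(0-1))) / (2*(n-t))^2) s t :=
      (hz' t ht).div hg (by positivity)
    set X := z t / (2*(n-t)) with hX
    set X' := (2 * y t / (y t + z t) * (2*(n-t)) - z t * (2*(0-1))) / (2*(n-t))^2 with hX'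
    have h1 : HasDerivWithinAt (fun u => Real.log ((z u / (2*(n-u)))^2 + 1))
        ((X^2+1)⁻¹ * ((2:ℕ) * X^(2-1) * X')) s t :=
      (Real.hasDerivAt_log (by positivity)).comp_hasDerivWithinAt t ((hXd.pow 2).add_const 1)
    have h2 : HasDerivWithinAt (fun u => Real.arctan (z u / (2*(n-u))))
        ((1 / (1 + X^2)) * X') s t :=
      (Real.hasDerivAt_arctan _).comp_hasDerivWithinAt t hXd
    have h3 : HasDerivWithinAt (fun u => Real.log (n - u)) ((n-t)⁻¹ * (0-1)) s t :=
      (Real.hasDerivAt_log hc.ne').comp_hasDerivWithinAt t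
        ((hasDerivWithinAt_const t s n).sub (hasDerivWithinAt_id t s))
    have htot := ((h1.const_mul (1/2)).add h2).add h3
    refine htot.congr_deriv ?_
    rw [hX', hX, hyt]
    have hd1 : (0:ℝ) < n - t + z t / 2 := by rw [hyt] at hyz; linarith
    have hd2 : (0:ℝ) < z t ^2 + 4*(n-t)^2 := by positivity
    set c := n - t with hcd
    set w := z t with hwd
    rw [hyt] at hyz
    have h5 : c - w / 2 + w ≠ 0 := by intro h; linarith
    have h6 : c * 2 + w ≠ 0 := by intro h; apply h5; linarith
    have h7 : 2 * c + w ≠ 0 := by intro h; apply h5; linarith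
    have h8 : w ^ 2 + 4 * c ^ 2 ≠ 0 := by positivity
    have h9 : c*2 - w + w*2 ≠ 0 := by intro h; apply h5; linarith
    clear_value c w
    field_simp [h9, h6, hc.ne']
    ring_nf
    field_simp
    ring
  -- Conclusion
  intro t ht
  have hc : 0 < n - t := by
    simp only [hs, Set.mem_Ico] at ht; linarith [ht.2]
  have h0 : G 0 = Real.log n := by
    simp [hGdef, hz0, Real.arctan_zero]
  have := hG t ht
  rw [h0, hGdef] at this
  simp only at this
  rw [Real.log_div hn.ne' hc.ne']
  linarith [this]
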